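/- (Collapsing colors is a chain map.) Let σ : W → X be a surjection of finite sets, (C, ρ) a bounded-above R_W-chain complex over F = ℤ/2ℤ, and give C the R_X-structure ρ∘R_σ. Let C̄_X = C⊗R_X⊗Ξ_X and C̄_W = C⊗R_W⊗Ξ_W be the preferred free resolutions with their differentials. Then σ̄ := Id_C ⊗ R_σ ⊗ Ξ_σ : C̄_X → C̄_W is an R_X-linear chain map, where R_X acts on C̄_W through R_σ. -/

import Mathlib

/-!
STATEMENT 10 (Collapsing colors is a chain map): Let σ : W → X be a surjection of finite
sets, (C, ρ) a bounded-above R_W-chain complex over F = ℤ/2ℤ (given by a differential d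
and commuting square-zero chain operators ρ(w)), and give C the R_X-structure ρ∘R_σ
(the generator x acts as Σ_{σ(w)=x} ρ(w)).  Let C̄_X = C⊗R_X⊗Ξ_X and C̄_W = C⊗R_W⊗Ξ_W
be the preferred free resolutions.  Then σ̄ = Id_C ⊗ R_σ ⊗ Ξ_σ : C̄_X → C̄_W is an
R_X-linear chain map, where R_X acts on C̄_W through R_σ.
-/

set_option synthInstance.maxHeartbeats 1000000
set_option maxHeartbeats 1000000

noncomputable section
open scoped TensorProduct

abbrev F2 := ZMod 2

abbrev Rgen (Y : Type) : Type :=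
  MvPolynomial Y F2 ⧸
    Ideal.span (Set.range fun y : Y => (MvPolynomial.X y : MvPolynomial Y F2) ^ 2)

def rgen {Y : Type} (y : Y) : Rgen Y := Ideal.Quotient.mk _ (MvPolynomial.X y)

abbrev XiX (Y : Type) : Type := (Y →₀ ℕ) →₀ F2

def ximon {Y : Type} (n : Y →₀ ℕ) : XiX Y := Finsupp.single n 1

def xiMul {Y : Type} [DecidableEq Y] (y : Y) : XiX Y →ₗ[F2] XiX Y :=
  Finsupp.lsum F2 fun n =>
    if n y = 0 then (0 : F2 →ₗ[F2] XiX Y)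
    else Finsupp.lsingle (n - Finsupp.single y 1)

def IsBddAboveComplex (C : Type) [AddCommGroup C] [Module F2 C]
    (d : C →ₗ[F2] C) : Prop :=
  d.comp d = 0 ∧
  ∃ Cdeg : ℤ → Submodule F2 C,
    DirectSum.IsInternal Cdeg ∧
    (∃ N : ℤ, ∀ n : ℤ, N < n → Cdeg n = ⊥) ∧
    ∀ n : ℤ, ∀ c ∈ Cdeg n, d c ∈ Cdeg (n + 1)

variable (Y : Type) [Fintype Y] [DecidableEq Y]
variable (C : Type) [AddCommGroup C] [Module F2 C]

/-- The preferred free resolution `C̄_Y = (R_Y ⊗ Ξ_Y) ⊗ C`. -/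
abbrev CbarY : Type := (Rgen Y ⊗[F2] XiX Y) ⊗[F2] C

/-- The differential of the preferred free resolution of `(C, d, act)` over `R_Y`:
`∂_C⊗1⊗1 + Σ_y (act(y)⊗1 + 1⊗y)⊗ξ_y`. -/
def delBar (d : C →ₗ[F2] C) (act : Y → C →ₗ[F2] C) : CbarY Y C →ₗ[F2] CbarY Y C :=
  TensorProduct.map LinearMap.id d +
    ∑ y : Y,
      (TensorProduct.map
          (TensorProduct.map (LinearMap.mulLeft F2 (rgen y)) (xiMul y)) LinearMap.id +
        TensorProduct.map (TensorProduct.map LinearMap.id (xiMul y)) (act y))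

/-- Multiplication by `r ∈ R_Y` on the middle factor of `C̄_Y`. -/
def midMul (r : Rgen Y) : CbarY Y C →ₗ[F2] CbarY Y C :=
  TensorProduct.map
    (TensorProduct.map (LinearMap.mulLeft F2 r) LinearMap.id) LinearMap.id

/-
R_σ sends x to the sum of the w in its fibre; this respects the relations x² = 0 because in
characteristic 2 a sum of square-zero elements is square-zero. Ξ_σ, which sends ξ^n to the sum of
the ξ^m with σ_* m = n, is pullback of coefficients along σ_* = `Finsupp.mapDomain σ` (its fibres
are finite, as σ_* preserves degree). Since σ_*(m + e_w) = σ_* m + e_{σ w}, contracting by ξ_w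
after Ξ_σ is Ξ_σ after contracting by ξ_{σ w}. Hence σ̄ carries the x-summand of ∂̄_X to the sum
of the w-summands of ∂̄_W over the fibre of x, and summing over x gives the chain map identity.
-/

open TensorProduct

lemma sq_sum_eq_zero_of_two_eq_zero {R ι : Type*} [CommSemiring R] (h2 : (2 : R) = 0)
    (s : Finset ι) {f : ι → R} (hf : ∀ i ∈ s, f i ^ 2 = 0) : (∑ i ∈ s, f i) ^ 2 = 0 :=
  Finset.sum_induction f (· ^ 2 = 0)
    (fun a b ha hb => by rw [add_sq, ha, hb, h2]; ring) (zero_pow two_ne_zero) hf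

lemma rgen_sq {Y : Type} (y : Y) : rgen y ^ 2 = 0 := by
  rw [rgen, ← map_pow, Ideal.Quotient.eq_zero_iff_mem]
  exact Ideal.subset_span ⟨y, rfl⟩

namespace Rgen

lemma two_eq_zero (Y : Type) : (2 : Rgen Y) = 0 := by
  rw [← map_ofNat (algebraMap F2 (Rgen Y)) 2, show (OfNat.ofNat 2 : F2) = 0 from rfl, map_zero]

variable {W X : Type} [Fintype W] [DecidableEq X]

def collapse (σ : W → X) : Rgen X →ₐ[F2] Rgen W :=
  Ideal.Quotient.liftₐ _
    (MvPolynomial.aeval fun x => ∑ w ∈ Finset.univ.filter (fun w => σ w = x), rgen w)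
    fun _ ha => RingHom.mem_ker.1 <| Ideal.span_le (I := RingHom.ker _) |>.2
      (Set.range_subset_iff.2 fun x => by
        simpa using sq_sum_eq_zero_of_two_eq_zero (two_eq_zero W) _ fun w _ => rgen_sq w) ha

lemma collapse_rgen (σ : W → X) (x : X) :
    collapse σ (rgen x) = ∑ w ∈ Finset.univ.filter (fun w => σ w = x), rgen w := by
  rw [collapse, Ideal.Quotient.liftₐ_apply, rgen]
  exact MvPolynomial.aeval_X _ x

end Rgen

namespace XiX

lemma xiMul_apply {Y : Type} [DecidableEq Y] (y : Y) (f : XiX Y) (n : Y →₀ ℕ) :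
    xiMul y f n = f (n + Finsupp.single y 1) := by
  induction f using Finsupp.induction_linear with
  | zero => simp
  | add f g hf hg => simp [hf, hg]
  | single k c =>
    by_cases hk : k y = 0
    · have hne : k ≠ n + Finsupp.single y 1 := fun h => by simp [h] at hk
      simp [xiMul, hk, hne]
    · have hle : Finsupp.single y 1 ≤ k := Finsupp.single_le_iff.2 (Nat.one_le_iff_ne_zero.2 hk)
      simp [xiMul, hk, Finsupp.single_apply, tsub_eq_iff_eq_add_of_le hle]

variable {W X : Type} [Finite W]

lemma finite_setOf_mapDomain_eq (σ : W → X) (n : X →₀ ℕ) :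
    {m : W →₀ ℕ | m.mapDomain σ = n}.Finite :=
  (Finsupp.finite_of_degree_eq n.degree).subset fun m hm => by simp [← hm.out]

def collapse (σ : W → X) : XiX X →ₗ[F2] XiX W where
  toFun f := Finsupp.ofSupportFinite (f ∘ Finsupp.mapDomain σ) <| by
    rw [Function.support_comp_eq_preimage]
    exact f.hasFiniteSupport.preimage' fun n _ => finite_setOf_mapDomain_eq σ n
  map_add' f g := by ext; simp [Finsupp.ofSupportFinite_coe]
  map_smul' c f := by ext; simp [Finsupp.ofSupportFinite_coe]

lemma collapse_apply (σ : W → X) (f : XiX X) (m : W →₀ ℕ) :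
    collapse σ f m = f (m.mapDomain σ) := rfl

lemma collapse_ximon (σ : W → X) (n : X →₀ ℕ) :
    collapse σ (ximon n) = ∑ᶠ m ∈ {m : W →₀ ℕ | m.mapDomain σ = n}, ximon m := by
  classical
  rw [finsum_mem_eq_finite_toFinset_sum _ (finite_setOf_mapDomain_eq σ n)]
  ext m
  simp [collapse_apply, ximon, Finsupp.finsetSum_apply, Finsupp.single_apply, eq_comm]

lemma xiMul_collapse [DecidableEq W] [DecidableEq X] (σ : W → X) (w : W) (f : XiX X) :
    xiMul w (collapse σ f) = collapse σ (xiMul (σ w) f) := by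
  ext m
  simp [xiMul_apply, collapse_apply, Finsupp.mapDomain_add, Finsupp.mapDomain_single]

end XiX

def delBarTerm {Y : Type} [DecidableEq Y] {C : Type} [AddCommGroup C] [Module F2 C]
    (act : Y → C →ₗ[F2] C) (y : Y) : CbarY Y C →ₗ[F2] CbarY Y C :=
  map (map (LinearMap.mulLeft F2 (rgen y)) (xiMul y)) LinearMap.id +
    map (map LinearMap.id (xiMul y)) (act y)

lemma delBar_eq_add_sum {Y : Type} [Fintype Y] [DecidableEq Y] {C : Type} [AddCommGroup C]
    [Module F2 C] (d : C →ₗ[F2] C) (act : Y → C →ₗ[F2] C) :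
    delBar Y C d act = map LinearMap.id d + ∑ y, delBarTerm act y := rfl

section Collapse

variable {W X : Type} [Fintype W] [DecidableEq X] (σ : W → X)
  {C : Type} [AddCommGroup C] [Module F2 C]

def collapseBar : CbarY X C →ₗ[F2] CbarY W C :=
  map (map (Rgen.collapse σ).toLinearMap (XiX.collapse σ)) LinearMap.id

lemma collapseBar_comp_midMul (r : Rgen X) :
    collapseBar σ ∘ₗ midMul X C r = midMul W C (Rgen.collapse σ r) ∘ₗ collapseBar σ := by
  have h : (Rgen.collapse σ).toLinearMap ∘ₗ LinearMap.mulLeft F2 r =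
      LinearMap.mulLeft F2 (Rgen.collapse σ r) ∘ₗ (Rgen.collapse σ).toLinearMap :=
    LinearMap.ext fun s => map_mul (Rgen.collapse σ) r s
  simp only [collapseBar, midMul, ← map_comp, h, LinearMap.id_comp, LinearMap.comp_id]

lemma collapseBar_comp_map_id (d : C →ₗ[F2] C) :
    collapseBar σ ∘ₗ map LinearMap.id d = map LinearMap.id d ∘ₗ collapseBar σ := by
  simp only [collapseBar, ← map_comp, LinearMap.id_comp, LinearMap.comp_id]

lemma collapseBar_comp_delBarTerm [DecidableEq W] (ρ : W → C →ₗ[F2] C) (x : X) :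
    collapseBar σ ∘ₗ delBarTerm (fun x => ∑ w ∈ Finset.univ.filter (fun w => σ w = x), ρ w) x =
      ∑ w ∈ Finset.univ.filter (fun w => σ w = x), delBarTerm ρ w ∘ₗ collapseBar σ := by
  refine TensorProduct.ext_threefold fun r q c => ?_
  simp only [collapseBar, delBarTerm, LinearMap.coe_comp, Function.comp_apply,
    LinearMap.add_apply, map_tmul, LinearMap.mulLeft_apply, LinearMap.id_coe, id_eq,
    LinearMap.coe_sum, Finset.sum_apply, tmul_sum, map_add, AlgHom.toLinearMap_apply, map_mul,
    Rgen.collapse_rgen, Finset.sum_mul, sum_tmul, map_sum]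
  rw [← Finset.sum_add_distrib]
  refine Finset.sum_congr rfl fun w hw => ?_
  rw [XiX.xiMul_collapse, (Finset.mem_filter.1 hw).2]

lemma collapseBar_comp_delBar [DecidableEq W] [Fintype X] (d : C →ₗ[F2] C) (ρ : W → C →ₗ[F2] C) :
    collapseBar σ ∘ₗ delBar X C d (fun x => ∑ w ∈ Finset.univ.filter (fun w => σ w = x), ρ w) =
      delBar W C d ρ ∘ₗ collapseBar σ := by
  rw [delBar_eq_add_sum, delBar_eq_add_sum, LinearMap.comp_add, LinearMap.add_comp,
    collapseBar_comp_map_id]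
  congr 1
  refine LinearMap.ext fun v => ?_
  rw [← Finset.sum_fiberwise Finset.univ σ]
  simp only [LinearMap.comp_apply, LinearMap.coe_sum, Finset.sum_apply, map_sum]
  exact Finset.sum_congr rfl fun x _ => by
    simpa using LinearMap.congr_fun (collapseBar_comp_delBarTerm σ ρ x) v

end Collapse

theorem stmt10 (W X : Type) [Fintype W] [Fintype X] [DecidableEq W] [DecidableEq X]
    (σ : W → X)
    (d : C →ₗ[F2] C) (ρ : W → C →ₗ[F2] C) :
    ∃ Rσ : Rgen X →ₐ[F2] Rgen W,
      (∀ x : X, Rσ (rgen x) = ∑ w ∈ Finset.univ.filter (fun w => σ w = x), rgen w) ∧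
      ∃ Ξσ : XiX X →ₗ[F2] XiX W,
        (∀ n : X →₀ ℕ,
          Ξσ (ximon n) = ∑ᶠ m ∈ {m : W →₀ ℕ | Finsupp.mapDomain σ m = n}, ximon m) ∧
        -- σ̄ = Id_C ⊗ R_σ ⊗ Ξ_σ is a chain map …
        (TensorProduct.map (TensorProduct.map Rσ.toLinearMap Ξσ) LinearMap.id).comp
            (delBar X C d fun x => ∑ w ∈ Finset.univ.filter (fun w => σ w = x), ρ w) =
          (delBar W C d ρ).comp
            (TensorProduct.map (TensorProduct.map Rσ.toLinearMap Ξσ) LinearMap.id) ∧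
        -- … and is R_X-linear, R_X acting on C̄_W through R_σ
        ∀ x : X,
          (TensorProduct.map (TensorProduct.map Rσ.toLinearMap Ξσ) LinearMap.id).comp
              (midMul X C (rgen x)) =
            (midMul W C (Rσ (rgen x))).comp
              (TensorProduct.map (TensorProduct.map Rσ.toLinearMap Ξσ) LinearMap.id) :=
  ⟨Rgen.collapse σ, Rgen.collapse_rgen σ, XiX.collapse σ, XiX.collapse_ximon σ,
    collapseBar_comp_delBar σ d ρ, fun x => collapseBar_comp_midMul σ (rgen x)⟩
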